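/- arXiv:2603.08510 — 4 statements merged into one kernel-verified Lean document; each statement's English description precedes it below -/
import Mathlib

section
/- Let p be a prime and α a positive integer. Then in the polynomial ring ℤ[X] one has (1 − X)^{p^α} ≡ (1 − X^p)^{p^{α−1}} (mod p^α), i.e. every coefficient of (1 − X)^{p^α} − (1 − X^p)^{p^{α−1}} is divisible by p^α. -/
theorem pow_prime_pow_congruence (p : ℕ) (hp : p.Prime) (α : ℕ) (hα : 1 ≤ α) (i : ℕ) :
    ((p : ℤ) ^ α) ∣
      (((1 - Polynomial.X) ^ p ^ α - (1 - Polynomial.X ^ p) ^ p ^ (α - 1) :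
        Polynomial ℤ)).coeff i := by
  haveI : Fact p.Prime := ⟨hp⟩
  have key : ((p : Polynomial ℤ)) ∣ (1 - Polynomial.X) ^ p - (1 - Polynomial.X ^ p) := by
    rw [show ((p : Polynomial ℤ)) = Polynomial.C (p : ℤ) by simp,
      Polynomial.C_dvd_iff_dvd_coeff]
    intro n
    have hmap : ((1 - Polynomial.X) ^ p - (1 - Polynomial.X ^ p) : Polynomial ℤ).map
        (Int.castRingHom (ZMod p)) = 0 := by
      simp only [Polynomial.map_sub, Polynomial.map_pow, Polynomial.map_one, Polynomial.map_X]
      rw [sub_pow_char]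
      ring
    have h3 := congrArg (fun f => Polynomial.coeff f n) hmap
    simp only [Polynomial.coeff_map, Polynomial.coeff_zero] at h3
    exact (ZMod.intCast_zmod_eq_zero_iff_dvd _ p).mp h3
  have h2 := dvd_sub_pow_of_dvd_sub key (α - 1)
  rw [Nat.sub_add_cancel hα, ← pow_mul, ← pow_succ', Nat.sub_add_cancel hα] at h2
  have : (Polynomial.C ((p : ℤ) ^ α)) ∣
      ((1 - Polynomial.X) ^ p ^ α - (1 - Polynomial.X ^ p) ^ p ^ (α - 1) : Polynomial ℤ) := by
    simpa [Polynomial.C_pow] using h2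
  exact (Polynomial.C_dvd_iff_dvd_coeff _ _).mp this i
end

section
/- Let p be a prime, α a positive integer, and N a positive integer. Then in ℤ[X] one has the congruence of finite products ∏_{k=1}^{N} (1 − X^k)^{p^α} ≡ ∏_{k=1}^{N} (1 − X^{pk})^{p^{α−1}} (mod p^α). -/
open Polynomial

lemma natCast_dvd_poly_iff_map_eq_zero (n : ℕ) (f : Polynomial ℤ) :
    (n : Polynomial ℤ) ∣ f ↔ f.map (Int.castRingHom (ZMod n)) = 0 := by
  rw [← Polynomial.C_eq_natCast, Polynomial.C_dvd_iff_dvd_coeff]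
  constructor
  · intro h
    ext i
    simp only [Polynomial.coeff_map, Polynomial.coeff_zero]
    rw [eq_intCast, ZMod.intCast_zmod_eq_zero_iff_dvd]
    exact_mod_cast h i
  · intro h i
    have := Polynomial.ext_iff.mp h i
    simp only [Polynomial.coeff_map, Polynomial.coeff_zero, eq_intCast,
      ZMod.intCast_zmod_eq_zero_iff_dvd] at this
    exact_mod_cast this

lemma key_term_dvd (p : ℕ) (hp : p.Prime) (α : ℕ) (hα : 1 ≤ α) (k : ℕ) :
    ((p : Polynomial ℤ)) ^ α ∣
      (1 - Polynomial.X ^ k) ^ p ^ α - (1 - Polynomial.X ^ (p * k)) ^ p ^ (α - 1) := by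
  obtain ⟨m, rfl⟩ : ∃ m, α = m + 1 := ⟨α - 1, (Nat.succ_pred_eq_of_pos hα).symm⟩
  have hbase : (p : Polynomial ℤ) ∣ (1 - Polynomial.X ^ k) ^ p - (1 - Polynomial.X ^ (p * k)) := by
    rw [natCast_dvd_poly_iff_map_eq_zero]
    haveI : Fact p.Prime := ⟨hp⟩
    have : ((1 : Polynomial (ZMod p)) - X ^ k) ^ p = 1 - X ^ (p * k) := by
      rw [sub_pow_char, one_pow, ← pow_mul, mul_comm]
    simp [Polynomial.map_sub, Polynomial.map_pow, this]
  have h2 := dvd_sub_pow_of_dvd_sub hbase m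
  rw [← pow_mul, ← pow_succ'] at h2
  simpa [Nat.add_sub_cancel] using h2

theorem prod_pow_prime_pow_congruence (p : ℕ) (hp : p.Prime) (α : ℕ) (hα : 1 ≤ α)
    (N : ℕ) (hN : 1 ≤ N) (i : ℕ) :
    ((p : ℤ) ^ α) ∣
      ((∏ k ∈ Finset.Icc 1 N, (1 - Polynomial.X ^ k) ^ p ^ α -
        ∏ k ∈ Finset.Icc 1 N, (1 - Polynomial.X ^ (p * k)) ^ p ^ (α - 1) :
          Polynomial ℤ)).coeff i := by
  have hdvd : ((p : Polynomial ℤ)) ^ α ∣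
      (∏ k ∈ Finset.Icc 1 N, (1 - Polynomial.X ^ k) ^ p ^ α -
        ∏ k ∈ Finset.Icc 1 N, (1 - Polynomial.X ^ (p * k)) ^ p ^ (α - 1)) := by
    rw [← Ideal.mem_span_singleton, ← Ideal.Quotient.eq]
    rw [map_prod, map_prod]
    exact Finset.prod_congr rfl fun k _ => (Ideal.Quotient.eq.mpr
      (Ideal.mem_span_singleton.mpr (key_term_dvd p hp α hα k)))
  have hC : ((p : Polynomial ℤ)) ^ α = Polynomial.C ((p : ℤ) ^ α) := by
    simp [map_pow]
  rw [hC, Polynomial.C_dvd_iff_dvd_coeff] at hdvd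
  exact hdvd i
end

section
/- In the ring ℤ[[q]] of formal power series over ℤ, the generating function identity φ(q) · ∑_{n≥0} p̄(n)(−1)^n q^n = 1 holds; equivalently, ∑_{n≥0} p̄(n)(−q)^n is the multiplicative inverse of φ(q). -/
/-!
Under `q ↦ -q` the claim reads `φ(-q) · ∑ p̄(n) qⁿ = 1`. By Euler,
`∑ p̄(n) qⁿ = (-q;q)_∞ / (q;q)_∞`, so it is Gauss's identity `φ(-q) (-q;q)_∞ = (q;q)_∞`, proved
modulo `q^(n+1)` for each `n`.
The `q`-binomial theorem with base `q²` gives the finite triple product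
`(q;q²)_n² = ∑_{a+b=2n} (-q)^((b-n)²) [2n choose b]_{q²}`. From
`[2n choose b]_{q²} (q²;q²)_a (q²;q²)_b = (q²;q²)_{2n}` and `(q²;q²)_m ≡ (q²;q²)_c mod q^(2c+2)`
for `m ≥ c`, each term `[2n choose b]_{q²} (q²;q²)_n` is `≡ 1 mod q^(2 min(a,b)+2)`, so
`(q;q²)_n² (q²;q²)_n ≡ ∑_{|j|≤n} (-q)^(j²) ≡ φ(-q)`. Then `(q;q)_{2n} = (q;q²)_n (q²;q²)_n` and
`(q;q)_{2n} (-q;q)_{2n} = (q²;q²)_{2n} ≡ (q²;q²)_n` finish the argument.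
-/

/-- Number of overpartitions of `n`: pairs of a partition of `k ≤ n` into distinct parts
together with an ordinary partition of `n - k`. -/
def overpartition (n : ℕ) : ℕ :=
  ∑ k ∈ Finset.range (n + 1),
    (Nat.Partition.distincts k).card * Fintype.card (Nat.Partition (n - k))

/-- The Ramanujan theta function `φ(q) = ∑_{n ∈ ℤ} q^{n²}` as a formal power series over `ℤ`:
its `n`-th coefficient is the number of integers `m` with `m² = n`. -/
noncomputable def phiq : PowerSeries ℤ :=
  PowerSeries.mk fun n => (Set.ncard {m : ℤ | m ^ 2 = (n : ℤ)} : ℤ)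

open PowerSeries Finset.HasAntidiagonal
open Finset hiding antidiagonal mem_antidiagonal
open Filter
open scoped PowerSeries.WithPiTopology

theorem smodEq_span_singleton_iff {R : Type*} [CommRing R] {a x y : R} :
    x ≡ y [SMOD Ideal.span {a}] ↔ a ∣ x - y := by
  rw [SModEq.sub_mem, Ideal.mem_span_singleton]

theorem two_mul_choose_two_add_self (b : ℕ) : 2 * b.choose 2 + b = b ^ 2 := by
  induction b with
  | zero => rfl
  | succ b ih => rw [Nat.choose_succ_succ', Nat.choose_one_right]; linear_combination ih

section QAnalogues

variable {R : Type*} [CommRing R]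

def qBinomial (q : R) : ℕ → ℕ → R
  | _, 0 => 1
  | 0, _ + 1 => 0
  | m + 1, k + 1 => qBinomial q m k + q ^ (k + 1) * qBinomial q m (k + 1)

/-- The `q`-Pochhammer symbol `(a;q)_n`. -/
def qPochhammer (a q : R) (n : ℕ) : R := ∏ i ∈ range n, (1 - a * q ^ i)

variable (q : R)

@[simp]
theorem qBinomial_zero_right (m : ℕ) : qBinomial q m 0 = 1 := by
  cases m <;> rfl

theorem qBinomial_succ_succ (m k : ℕ) :
    qBinomial q (m + 1) (k + 1) = qBinomial q m k + q ^ (k + 1) * qBinomial q m (k + 1) := rfl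

theorem qBinomial_eq_zero_of_lt {m k : ℕ} (h : m < k) : qBinomial q m k = 0 := by
  induction m generalizing k with
  | zero => obtain ⟨k, rfl⟩ := Nat.exists_eq_add_one.mpr h; rfl
  | succ m ih =>
    obtain ⟨k, rfl⟩ := Nat.exists_eq_add_one.mpr (Nat.zero_lt_of_lt h)
    rw [qBinomial_succ_succ, ih (by omega), ih (by omega), mul_zero, add_zero]

@[simp]
theorem qBinomial_self (m : ℕ) : qBinomial q m m = 1 := by
  induction m with
  | zero => rfl
  | succ m ih => rw [qBinomial_succ_succ, ih, qBinomial_eq_zero_of_lt q m.lt_succ_self, mul_zero,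
      add_zero]

theorem prod_add_mul_pow_eq_sum_qBinomial (x : R) (m : ℕ) (y : R) :
    ∏ i ∈ range m, (x + q ^ i * y) =
      ∑ p ∈ antidiagonal m, q ^ p.2.choose 2 * qBinomial q m p.2 * x ^ p.1 * y ^ p.2 := by
  induction m generalizing y with
  | zero => simp
  | succ m ih =>
    have hx :
        x * ∑ p ∈ antidiagonal m, q ^ p.2.choose 2 * qBinomial q m p.2 * x ^ p.1 * (q * y) ^ p.2 =
          x ^ (m + 1) + ∑ p ∈ antidiagonal m, q ^ ((p.2 + 1).choose 2 + (p.2 + 1)) *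
            qBinomial q m (p.2 + 1) * x ^ p.1 * y ^ (p.2 + 1) := by
      have h := (Nat.sum_antidiagonal_succ (n := m) (f := fun p =>
        q ^ (p.2.choose 2 + p.2) * qBinomial q m p.2 * x ^ p.1 * y ^ p.2)).symm.trans
          Nat.sum_antidiagonal_succ'
      simp only [qBinomial_eq_zero_of_lt q m.lt_succ_self, mul_zero, zero_mul, zero_add,
        qBinomial_zero_right, Nat.choose_zero_succ, pow_zero, mul_one, one_mul] at h
      rw [← h, mul_sum]
      refine sum_congr rfl fun p _ => ?_
      ring
    have hshift : ∏ i ∈ range m, (x + q ^ (i + 1) * y) = ∏ i ∈ range m, (x + q ^ i * (q * y)) :=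
      prod_congr rfl fun i _ => by ring
    rw [prod_range_succ', pow_zero, one_mul, hshift, ih, mul_comm, add_mul, hx,
      mul_sum, Nat.sum_antidiagonal_succ']
    simp only [qBinomial_zero_right, Nat.choose_zero_succ, pow_zero, qBinomial_succ_succ]
    rw [add_assoc, ← sum_add_distrib]
    congr 1
    · ring
    · refine sum_congr rfl fun p _ => ?_
      rw [Nat.choose_succ_succ', Nat.choose_one_right]
      ring

theorem qPochhammer_zero (a : R) : qPochhammer a q 0 = 1 := prod_range_zero _

theorem qPochhammer_succ (a : R) (n : ℕ) :
    qPochhammer a q (n + 1) = qPochhammer a q n * (1 - a * q ^ n) := prod_range_succ _ _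

theorem qBinomial_mul_qPochhammer_mul_qPochhammer (a b : ℕ) :
    qBinomial q (a + b) b * qPochhammer q q a * qPochhammer q q b = qPochhammer q q (a + b) := by
  induction b generalizing a with
  | zero => simp [qPochhammer_zero]
  | succ b ihb =>
    induction a with
    | zero => simp [qPochhammer_zero]
    | succ a iha =>
      have h₁ := ihb (a + 1)
      rw [show a + 1 + b = a + b + 1 by omega, qPochhammer_succ q q a] at h₁
      rw [show a + (b + 1) = a + b + 1 by omega, qPochhammer_succ q q b] at iha
      rw [show a + 1 + (b + 1) = a + b + 1 + 1 by omega, qBinomial_succ_succ,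
        qPochhammer_succ q q (a + b + 1), qPochhammer_succ q q a, qPochhammer_succ q q b]
      linear_combination (1 - q * q ^ b) * h₁ + q ^ (b + 1) * (1 - q * q ^ a) * iha

theorem qPochhammer_smodEq {a : R} {c n : ℕ} (h : c ≤ n) :
    qPochhammer a q n ≡ qPochhammer a q c [SMOD Ideal.span {a * q ^ c}] := by
  induction n, h using Nat.le_induction with
  | base => rfl
  | succ n hcn ih =>
    have : 1 - a * q ^ n ≡ 1 [SMOD Ideal.span {a * q ^ c}] := by
      rw [SModEq.sub_mem, sub_sub_cancel_left, neg_mem_iff, Ideal.mem_span_singleton]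
      exact mul_dvd_mul_left a (pow_dvd_pow q hcn)
    simpa [qPochhammer_succ] using ih.mul this

theorem qBinomial_mul_qPochhammer_smodEq {a b c n : ℕ} (ha : c ≤ a) (hb : c ≤ b)
    (hn : c ≤ n) :
    qBinomial q (a + b) b * qPochhammer q q n * (qPochhammer q q a * qPochhammer q q b) ≡
      qPochhammer q q a * qPochhammer q q b [SMOD Ideal.span {q ^ (c + 1)}] := by
  have hP {i : ℕ} (hi : c ≤ i) :
      qPochhammer q q i ≡ qPochhammer q q c [SMOD Ideal.span {q ^ (c + 1)}] := by
    simpa only [pow_succ'] using qPochhammer_smodEq q hi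
  calc qBinomial q (a + b) b * qPochhammer q q n * (qPochhammer q q a * qPochhammer q q b)
      = qPochhammer q q (a + b) * qPochhammer q q n := by
        rw [← qBinomial_mul_qPochhammer_mul_qPochhammer]; ring
    _ ≡ qPochhammer q q c * qPochhammer q q c [SMOD Ideal.span {q ^ (c + 1)}] :=
        (hP (by omega)).mul (hP hn)
    _ ≡ qPochhammer q q a * qPochhammer q q b [SMOD Ideal.span {q ^ (c + 1)}] :=
        ((hP ha).mul (hP hb)).symm

theorem pow_choose_two_mul_pow_mul_neg_pow {a b n : ℕ} (h : a + b = 2 * n) :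
    (q ^ 2) ^ b.choose 2 * (q ^ (2 * n)) ^ a * (-q) ^ b =
      (-1) ^ n * q ^ (3 * n ^ 2) * (-q) ^ (((b : ℤ) - n).natAbs ^ 2) := by
  set d := ((b : ℤ) - n).natAbs
  have hexp : 2 * b.choose 2 + 2 * n * a + b = 3 * n ^ 2 + d ^ 2 := by
    have hd : (d : ℤ) ^ 2 = ((b : ℤ) - n) ^ 2 := Int.natAbs_sq _
    have hb : ((2 * b.choose 2 + b : ℕ) : ℤ) = (b : ℤ) ^ 2 := by
      rw [two_mul_choose_two_add_self]; push_cast; ring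
    have ha : (a : ℤ) = 2 * n - b := by omega
    zify
    push_cast at hb
    linear_combination hb - hd + 2 * (n : ℤ) * ha
  have hsign : (-1 : R) ^ b = (-1) ^ n * (-1) ^ (d ^ 2) := by
    have hpar : b % 2 = (n + d ^ 2) % 2 := by
      have hd : d % 2 = (b + n) % 2 := by omega
      rcases Nat.even_or_odd d with ⟨k, hk⟩ | ⟨k, hk⟩ <;> rw [hk] at hd ⊢ <;> ring_nf <;>
        omega
    rw [← pow_add, neg_one_pow_eq_pow_mod_two, hpar, ← neg_one_pow_eq_pow_mod_two]
  calc (q ^ 2) ^ b.choose 2 * (q ^ (2 * n)) ^ a * (-q) ^ b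
      = (-1) ^ b * q ^ (2 * b.choose 2 + 2 * n * a + b) := by ring
    _ = (-1) ^ n * q ^ (3 * n ^ 2) * (-q) ^ d ^ 2 := by rw [hexp, hsign]; ring

theorem prod_range_two_mul_pow_sub_pow (n : ℕ) :
    ∏ i ∈ range (2 * n), (q ^ (2 * n) - q ^ (2 * i + 1)) =
      (-1) ^ n * q ^ (3 * n ^ 2) * qPochhammer q (q ^ 2) n ^ 2 := by
  have hodd : ∏ i ∈ range n, q ^ (2 * i + 1) = q ^ (n ^ 2) := by
    induction n with
    | zero => simp
    | succ n ih => rw [prod_range_succ, ih, ← pow_add]; ring_nf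
  have hlow : ∏ i ∈ range n, (q ^ (2 * n) - q ^ (2 * i + 1)) =
      (-1) ^ n * q ^ (n ^ 2) * qPochhammer q (q ^ 2) n := by
    calc ∏ i ∈ range n, (q ^ (2 * n) - q ^ (2 * i + 1))
        = ∏ i ∈ range n, (-1) * q ^ (2 * i + 1) * (1 - q * (q ^ 2) ^ (n - 1 - i)) := by
          refine prod_congr rfl fun i hi => ?_
          obtain ⟨k, rfl⟩ := Nat.exists_eq_add_of_lt (mem_range.mp hi)
          rw [show i + k + 1 - 1 - i = k by omega]
          ring
      _ = (-1) ^ n * q ^ (n ^ 2) * qPochhammer q (q ^ 2) n := by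
          rw [prod_mul_distrib, prod_mul_distrib, prod_const, card_range, hodd, qPochhammer,
            prod_range_reflect (fun i => 1 - q * (q ^ 2) ^ i)]
  have hhigh : ∏ i ∈ range n, (q ^ (2 * n) - q ^ (2 * (n + i) + 1)) =
      q ^ (2 * n ^ 2) * qPochhammer q (q ^ 2) n := by
    rw [qPochhammer, show q ^ (2 * n ^ 2) = (q ^ (2 * n)) ^ #(range n) by rw [card_range]; ring,
      pow_card_mul_prod]
    exact prod_congr rfl fun i _ => by ring
  rw [two_mul, prod_range_add, ← two_mul, hlow, hhigh]
  ring

theorem qPochhammer_two_mul (n : ℕ) :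
    qPochhammer q q (2 * n) = qPochhammer q (q ^ 2) n * qPochhammer (q ^ 2) (q ^ 2) n := by
  induction n with
  | zero => simp [qPochhammer_zero]
  | succ n ih =>
    rw [show 2 * (n + 1) = 2 * n + 1 + 1 by ring, qPochhammer_succ, qPochhammer_succ, ih,
      qPochhammer_succ, qPochhammer_succ]
    ring

theorem qPochhammer_mul_qPochhammer_neg (n : ℕ) :
    qPochhammer q q n * qPochhammer (-q) q n = qPochhammer (q ^ 2) (q ^ 2) n := by
  rw [qPochhammer, qPochhammer, qPochhammer, ← prod_mul_distrib]
  exact prod_congr rfl fun i _ => by ring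

end QAnalogues

namespace PowerSeries

variable {R : Type*} [CommRing R]

theorem coeff_eq_of_smodEq_X_pow {f g : R⟦X⟧} {N d : ℕ}
    (h : f ≡ g [SMOD Ideal.span {X ^ N}]) (hd : d < N) : coeff d f = coeff d g := by
  rw [smodEq_span_singleton_iff, X_pow_dvd_iff] at h
  simpa [sub_eq_zero] using h d hd

theorem eq_of_forall_smodEq_X_pow {f g : R⟦X⟧}
    (h : ∀ n, f ≡ g [SMOD Ideal.span {X ^ (n + 1)}]) : f = g :=
  ext fun n => coeff_eq_of_smodEq_X_pow (h n) n.lt_succ_self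

theorem coeff_neg_X_pow (e k : ℕ) :
    coeff e ((-X : R⟦X⟧) ^ k) = if e = k then (-1) ^ e else 0 := by
  rw [neg_pow, show ((-1 : R⟦X⟧) ^ k) = C ((-1) ^ k) by simp, coeff_C_mul_X_pow]
  split_ifs with h <;> simp [h]

theorem isUnit_qPochhammer {a q : R⟦X⟧} (ha : constantCoeff a = 0) (n : ℕ) :
    IsUnit (qPochhammer a q n) := by
  rw [isUnit_iff_constantCoeff, qPochhammer, map_prod]
  simp [ha]

theorem qPochhammer_sq_eq_sum_qBinomial (n : ℕ) :
    qPochhammer X (X ^ 2) n ^ 2 = ∑ p ∈ antidiagonal (2 * n),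
      (-X) ^ (((p.2 : ℤ) - n).natAbs ^ 2) * qBinomial (X ^ 2 : R⟦X⟧) (2 * n) p.2 := by
  have h := prod_add_mul_pow_eq_sum_qBinomial (X ^ 2 : R⟦X⟧) (X ^ (2 * n)) (2 * n) (-X)
  have hprod : ∏ i ∈ range (2 * n), ((X : R⟦X⟧) ^ (2 * n) + (X ^ 2) ^ i * -X) =
      ∏ i ∈ range (2 * n), (X ^ (2 * n) - X ^ (2 * i + 1)) :=
    prod_congr rfl fun i _ => by ring
  rw [hprod, prod_range_two_mul_pow_sub_pow, mul_assoc] at h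
  have hterm : ∀ p ∈ antidiagonal (2 * n),
      (X ^ 2) ^ p.2.choose 2 * qBinomial (X ^ 2) (2 * n) p.2 * (X ^ (2 * n)) ^ p.1 * (-X) ^ p.2 =
        (-1) ^ n * (X ^ (3 * n ^ 2) *
          ((-X) ^ (((p.2 : ℤ) - n).natAbs ^ 2) * qBinomial (X ^ 2 : R⟦X⟧) (2 * n) p.2)) := by
    intro p hp
    rw [← mul_assoc, ← mul_assoc,
      ← pow_choose_two_mul_pow_mul_neg_pow X (mem_antidiagonal.mp hp)]
    ring
  rw [sum_congr rfl hterm, ← mul_sum, ← mul_sum] at h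
  exact X_pow_mul_cancel ((isUnit_neg_one.pow n).mul_left_cancel h)

theorem qPochhammer_sq_mul_qPochhammer_smodEq (n : ℕ) :
    qPochhammer X (X ^ 2) n ^ 2 * qPochhammer (X ^ 2) (X ^ 2) n ≡
      ∑ p ∈ antidiagonal (2 * n), (-X : R⟦X⟧) ^ (((p.2 : ℤ) - n).natAbs ^ 2)
        [SMOD Ideal.span {X ^ (n + 1)}] := by
  rw [qPochhammer_sq_eq_sum_qBinomial, sum_mul]
  refine SModEq.sum fun ⟨a, b⟩ hp => ?_
  have hab : a + b = 2 * n := mem_antidiagonal.mp hp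
  set d := ((b : ℤ) - n).natAbs
  obtain ⟨u, hu⟩ := (isUnit_qPochhammer (a := (X ^ 2 : R⟦X⟧)) (q := X ^ 2) (by simp) a).mul
    (isUnit_qPochhammer (a := (X ^ 2 : R⟦X⟧)) (q := X ^ 2) (by simp) b)
  have hq := qBinomial_mul_qPochhammer_smodEq (X ^ 2 : R⟦X⟧) (min_le_left a b)
    (min_le_right a b) (n := n) (by omega)
  rw [hab, ← hu] at hq
  have hq' : qBinomial (X ^ 2 : R⟦X⟧) (2 * n) b * qPochhammer (X ^ 2) (X ^ 2) n ≡ 1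
      [SMOD Ideal.span {(X ^ 2) ^ (min a b + 1)}] := by
    simpa [mul_assoc] using hq.mul (SModEq.refl (↑u⁻¹ : R⟦X⟧))
  have hexp : n + 1 ≤ d ^ 2 + 2 * (min a b + 1) := by
    have : min a b + d = n := by omega
    nlinarith
  rw [smodEq_span_singleton_iff] at hq' ⊢
  calc X ^ (n + 1) ∣ (-X) ^ d ^ 2 * (X ^ 2) ^ (min a b + 1) := by
        rw [neg_pow, ← pow_mul, mul_assoc, ← pow_add]
        exact dvd_mul_of_dvd_right (pow_dvd_pow X (by omega)) _
    _ ∣ (-X) ^ d ^ 2 * (qBinomial (X ^ 2) (2 * n) b * qPochhammer (X ^ 2) (X ^ 2) n - 1) :=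
        mul_dvd_mul_left _ hq'
    _ = _ := by ring

end PowerSeries

theorem HasProd.smodEq_prod_range {R : Type*} [CommRing R] [TopologicalSpace R] [T2Space R]
    {f : ℕ → R⟦X⟧} {a : R⟦X⟧} {m N : ℕ} (hf : HasProd f a)
    (h : ∀ i, m ≤ i → f i ≡ 1 [SMOD Ideal.span {X ^ N}]) :
    a ≡ ∏ i ∈ range m, f i [SMOD Ideal.span {X ^ N}] := by
  rw [smodEq_span_singleton_iff, X_pow_dvd_iff]
  intro d hd
  rw [map_sub, sub_eq_zero]
  refine tendsto_nhds_unique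
    (((WithPiTopology.continuous_coeff R d).tendsto a).comp hf.tendsto_prod_nat)
    (tendsto_const_nhds.congr' ?_)
  filter_upwards [eventually_ge_atTop m] with n hn
  refine (coeff_eq_of_smodEq_X_pow ?_ hd).symm
  dsimp only
  rw [← prod_range_mul_prod_Ico f hn]
  simpa using (SModEq.refl (∏ i ∈ range m, f i)).mul
    (SModEq.prod fun i hi => h i (mem_Ico.mp hi).1)

section PartitionProducts

variable {R : Type*} [CommRing R] [TopologicalSpace R] [T2Space R]

theorem hasProd_one_add_X_pow_mk_card_distincts :
    HasProd (fun i => (1 + X ^ (i + 1) : R⟦X⟧))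
      (mk fun n => (#(Nat.Partition.distincts n) : R)) := by
  simpa [Nat.Partition.countRestricted_two, sum_range, Fin.sum_univ_two] using
    Nat.Partition.hasProd_powerSeriesMk_card_countRestricted R two_pos

theorem tprod_one_sub_X_pow_smodEq (m : ℕ) :
    ∏' i, (1 - X ^ (i + 1) : R⟦X⟧) ≡ qPochhammer X X m [SMOD Ideal.span {X ^ (m + 1)}] := by
  have h := (WithPiTopology.multipliable_one_sub_X_pow R).hasProd.smodEq_prod_range (m := m)
    (N := m + 1) fun i hi => by
      rw [smodEq_span_singleton_iff, sub_sub_cancel_left, dvd_neg]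
      exact pow_dvd_pow X (by omega)
  convert h using 1
  exact prod_congr rfl fun i _ => by ring

theorem mk_card_distincts_smodEq (m : ℕ) :
    mk (fun n => (#(Nat.Partition.distincts n) : R)) ≡ qPochhammer (-X) X m
      [SMOD Ideal.span {X ^ (m + 1)}] := by
  have h := (hasProd_one_add_X_pow_mk_card_distincts (R := R)).smodEq_prod_range (m := m)
    (N := m + 1) fun i hi => by
      rw [smodEq_span_singleton_iff, add_sub_cancel_left]
      exact pow_dvd_pow X (by omega)
  convert h using 1
  exact prod_congr rfl fun i _ => by ring

theorem mk_card_partition_mul_tprod_one_sub_X_pow [IsTopologicalRing R] :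
    mk (fun n => (Fintype.card n.Partition : R)) * ∏' i, (1 - X ^ (i + 1) : R⟦X⟧) = 1 := by
  have h := (Nat.Partition.hasProd_powerSeriesMk_card_restricted R (fun _ => True)).mul
    (WithPiTopology.multipliable_one_sub_X_pow R).hasProd
  simp only [↓reduceIte, Nat.Partition.restricted, implies_true, filter_true, card_univ] at h
  refine h.unique ?_
  convert hasProd_one with i
  simp_rw [pow_mul]
  exact WithPiTopology.tsum_pow_mul_one_sub_of_constantCoeff_eq_zero (by simp)

end PartitionProducts

theorem mk_overpartition {R : Type*} [CommSemiring R] :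
    mk (fun n => (overpartition n : R)) = mk (fun n => (#(Nat.Partition.distincts n) : R)) *
      mk (fun n => (Fintype.card n.Partition : R)) := by
  ext n
  simp [overpartition, coeff_mul, Nat.sum_antidiagonal_eq_sum_range_succ_mk]

theorem ncard_sq_eq_card_antidiagonal {n e : ℕ} (he : e ≤ n) :
    {m : ℤ | m ^ 2 = e}.ncard =
      #((antidiagonal (2 * n)).filter fun p : ℕ × ℕ => ((p.2 : ℤ) - n).natAbs ^ 2 = e) := by
  have hset : {m : ℤ | m ^ 2 = e} = (((antidiagonal (2 * n)).filter fun p : ℕ × ℕ =>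
      ((p.2 : ℤ) - n).natAbs ^ 2 = e).image fun p => (p.2 : ℤ) - n : Set ℤ) := by
    ext m
    simp only [Set.mem_ofPred_eq, coe_image, coe_filter, mem_antidiagonal, Set.mem_image,
      Set.mem_ofPred_eq, Prod.exists]
    constructor
    · intro hm
      have hmn := Int.natAbs_le_self_sq m
      rw [hm] at hmn
      refine ⟨(n - m).toNat, (n + m).toNat, ⟨by omega, ?_⟩, by omega⟩
      zify
      rw [show ((n + m).toNat : ℤ) - n = m by omega, sq_abs, hm]
    · rintro ⟨a, b, ⟨-, hb⟩, rfl⟩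
      rw [← Int.natAbs_sq]
      exact_mod_cast hb
  rw [hset, Set.ncard_coe_finset, card_image_of_injOn]
  rintro ⟨a, b⟩ hp ⟨a', b'⟩ hp' h
  simp only [coe_filter, mem_antidiagonal, Set.mem_ofPred_eq] at hp hp' h
  simp only [Prod.mk.injEq]
  omega

theorem rescale_neg_one_phiq_smodEq (n : ℕ) :
    rescale (-1) phiq ≡ ∑ p ∈ antidiagonal (2 * n), (-X : ℤ⟦X⟧) ^ (((p.2 : ℤ) - n).natAbs ^ 2)
      [SMOD Ideal.span {X ^ (n + 1)}] := by
  rw [smodEq_span_singleton_iff, X_pow_dvd_iff]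
  intro e he
  rw [map_sub, sub_eq_zero, coeff_rescale, phiq, coeff_mk, map_sum,
    ncard_sq_eq_card_antidiagonal (Nat.lt_succ_iff.mp he)]
  simp only [coeff_neg_X_pow, ← sum_filter, sum_const, nsmul_eq_mul, eq_comm (a := e)]
  ring

theorem rescale_neg_one_phiq_mul_mk_card_distincts :
    rescale (-1) phiq * mk (fun n => (#(Nat.Partition.distincts n) : ℤ)) =
      ∏' i, (1 - X ^ (i + 1) : ℤ⟦X⟧) := by
  refine eq_of_forall_smodEq_X_pow fun n => ?_
  have hmono {f g c : ℤ⟦X⟧} (hc : X ^ (n + 1) ∣ c) (h : f ≡ g [SMOD Ideal.span {c}]) :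
      f ≡ g [SMOD Ideal.span {X ^ (n + 1)}] :=
    h.mono (Ideal.span_singleton_le_span_singleton.mpr hc)
  have hθ := (rescale_neg_one_phiq_smodEq n).trans (qPochhammer_sq_mul_qPochhammer_smodEq n).symm
  have hE : qPochhammer (X ^ 2 : ℤ⟦X⟧) (X ^ 2) (2 * n) ≡ qPochhammer (X ^ 2) (X ^ 2) n
      [SMOD Ideal.span {X ^ (n + 1)}] :=
    hmono (by rw [← pow_mul, ← pow_add]; exact pow_dvd_pow X (by omega))
      (qPochhammer_smodEq (a := (X ^ 2 : ℤ⟦X⟧)) (X ^ 2) (by omega : n ≤ 2 * n))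
  calc rescale (-1) phiq * PowerSeries.mk (fun n => (#(Nat.Partition.distincts n) : ℤ))
      ≡ qPochhammer X (X ^ 2) n ^ 2 * qPochhammer (X ^ 2) (X ^ 2) n * qPochhammer (-X) X (2 * n)
        [SMOD Ideal.span {X ^ (n + 1)}] :=
          hθ.mul (hmono (pow_dvd_pow X (by omega)) (mk_card_distincts_smodEq _))
    _ = qPochhammer X (X ^ 2) n * qPochhammer (X ^ 2) (X ^ 2) (2 * n) := by
        rw [← qPochhammer_mul_qPochhammer_neg X (2 * n), qPochhammer_two_mul X n]; ring
    _ ≡ qPochhammer X (X ^ 2) n * qPochhammer (X ^ 2) (X ^ 2) n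
        [SMOD Ideal.span {X ^ (n + 1)}] := SModEq.rfl.mul hE
    _ = qPochhammer X X (2 * n) := (qPochhammer_two_mul X n).symm
    _ ≡ ∏' i, (1 - X ^ (i + 1) : ℤ⟦X⟧) [SMOD Ideal.span {X ^ (n + 1)}] :=
        (hmono (pow_dvd_pow X (by omega)) (tprod_one_sub_X_pow_smodEq _)).symm

theorem phiq_mul_overpartitionGF_eq_one :
    phiq * PowerSeries.mk (fun n => ((-1) ^ n * overpartition n : ℤ)) = 1 := by
  have h : rescale (-1) phiq * mk (fun n => (overpartition n : ℤ)) = 1 := by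
    rw [mk_overpartition, ← mul_assoc, rescale_neg_one_phiq_mul_mk_card_distincts, mul_comm,
      mk_card_partition_mul_tprod_one_sub_X_pow]
  simpa [rescale_rescale, rescale_mk] using congrArg (rescale (-1)) h
end

section
/- In ℤ[[q]], ∏_{k≥1}(1 − q^k)^2 · ∑_{n≥0} p̄(n) q^n = ∏_{k≥1}(1 − q^{2k}). -/
/-- The infinite product `∏_{k ≥ 1} (1 - q^{d·k})^e` in `ℤ⟦q⟧` (taken in the `q`-adic topology);
its `n`-th coefficient agrees with that of the partial product over `1 ≤ k ≤ n`,
since all further factors are `1 + O(q^{n+1})`. -/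
noncomputable def prodPow (d e : ℕ) : PowerSeries ℤ :=
  PowerSeries.mk fun n =>
    PowerSeries.coeff n (∏ k ∈ Finset.Icc 1 n, (1 - (PowerSeries.X : PowerSeries ℤ) ^ (d * k)) ^ e)

/-- The eta-quotient `F(q) = q · ∏_{k≥1}(1 - q^{4k})^8 · (∏_{k≥1}(1 - q^{2k})^4)⁻¹`,
where the inverse is taken via `PowerSeries.invOfUnit` (the constant term is `1`). -/
noncomputable def Fq : PowerSeries ℤ :=
  PowerSeries.X * prodPow 4 8 * PowerSeries.invOfUnit (prodPow 2 4) 1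

namespace OP

open PowerSeries Finset
open scoped Classical

noncomputable section

/-- A convenience constructor for the power series whose coefficients indicate a subset. -/
def indicatorSeries (α : Type*) [Semiring α] (s : Set ℕ) : PowerSeries α :=
  PowerSeries.mk fun n => if n ∈ s then 1 else 0

theorem coeff_indicator {α : Type*} (s : Set ℕ) [Semiring α] (n : ℕ) :
    coeff n (indicatorSeries α s) = if n ∈ s then 1 else 0 :=
  coeff_mk _ _

theorem two_series {α : Type*} (i : ℕ) [Semiring α] :
    1 + (X : PowerSeries α) ^ i.succ = indicatorSeries α {0, i.succ} := by
  ext n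
  simp only [coeff_indicator, coeff_one, coeff_X_pow, Set.mem_insert_iff, Set.mem_singleton_iff,
    map_add]
  cases' n with d
  · simp [(Nat.succ_ne_zero i).symm]
  · simp [Nat.succ_ne_zero d]

-- The main workhorse (copied from Archive.Wiedijk100Theorems.Partition).
theorem partialGF_prop (α : Type*) [CommSemiring α] (n : ℕ) (s : Finset ℕ) (hs : ∀ i ∈ s, 0 < i)
    (c : ℕ → Set ℕ) (hc : ∀ i, i ∉ s → 0 ∈ c i) :
    #{p : n.Partition | (∀ j, p.parts.count j ∈ c j) ∧ ∀ j ∈ p.parts, j ∈ s} =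
      coeff n (∏ i ∈ s, indicatorSeries α ((· * i) '' c i)) := by
  simp_rw [coeff_prod, coeff_indicator, prod_boole, sum_boole]
  apply congr_arg
  simp only [mem_univ, forall_true_left, not_and, not_forall, exists_prop,
    Set.mem_image, not_exists]
  set φ : (a : Nat.Partition n) →
    a ∈ filter (fun p ↦ (∀ (j : ℕ), Multiset.count j p.parts ∈ c j) ∧ ∀ j ∈ p.parts, j ∈ s) univ →
    ℕ →₀ ℕ := fun p _ => {
      toFun := fun i => Multiset.count i p.parts • i
      support := Finset.filter (fun i => i ≠ 0) p.parts.toFinset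
      mem_support_toFun := fun a => by
        simp only [smul_eq_mul, ne_eq, mul_eq_zero, Multiset.count_eq_zero]
        rw [not_or, not_not]
        simp only [Multiset.mem_toFinset, not_not, mem_filter] }
  refine Finset.card_bij φ ?_ ?_ ?_
  · intro a ha
    simp only [φ, not_forall, not_exists, not_and, exists_prop, mem_filter]
    rw [mem_finsuppAntidiag]
    dsimp only [ne_eq, smul_eq_mul, id_eq, eq_mpr_eq_cast, le_eq_subset, Finsupp.coe_mk]
    simp only [mem_univ, forall_true_left, not_and, not_forall, exists_prop,
      mem_filter, true_and] at ha
    refine ⟨⟨?_, fun i ↦ ?_⟩, fun i _ ↦ ⟨a.parts.count i, ha.1 i, rfl⟩⟩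
    · conv_rhs => simp [← a.parts_sum]
      rw [sum_multiset_count_of_subset _ s]
      · simp only [smul_eq_mul]
      · intro i
        simp only [Multiset.mem_toFinset, not_not, mem_filter]
        apply ha.2
    · simp only [ne_eq, Multiset.mem_toFinset, not_not, mem_filter, and_imp]
      exact fun hi _ ↦ ha.2 i hi
  · intro p₁ hp₁ p₂ hp₂ h
    apply Nat.Partition.ext
    simp only [true_and, mem_univ, mem_filter] at hp₁ hp₂
    ext i
    simp only [φ, ne_eq, Multiset.mem_toFinset, not_not, smul_eq_mul, Finsupp.mk.injEq] at h
    by_cases hi : i = 0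
    · rw [hi]
      rw [Multiset.count_eq_zero_of_notMem]
      · rw [Multiset.count_eq_zero_of_notMem]
        intro a; exact Nat.lt_irrefl 0 (hs 0 (hp₂.2 0 a))
      intro a; exact Nat.lt_irrefl 0 (hs 0 (hp₁.2 0 a))
    · rw [← mul_left_inj' hi]
      rw [funext_iff] at h
      exact h.2 i
  · simp only [φ, mem_filter, mem_finsuppAntidiag, mem_univ, exists_prop, true_and, and_assoc]
    rintro f ⟨hf, hf₃, hf₄⟩
    have hf' : f ∈ finsuppAntidiag s n := mem_finsuppAntidiag.mpr ⟨hf, hf₃⟩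
    simp only [mem_finsuppAntidiag] at hf'
    refine ⟨⟨∑ i ∈ s, Multiset.replicate (f i / i) i, ?_, ?_⟩, ?_, ?_, ?_⟩
    · intro i hi
      simp only [exists_prop, Multiset.mem_sum, mem_map, Function.Embedding.coeFn_mk] at hi
      rcases hi with ⟨t, ht, z⟩
      apply hs
      rwa [Multiset.eq_of_mem_replicate z]
    · simp_rw [Multiset.sum_sum, Multiset.sum_replicate, Nat.nsmul_eq_mul]
      rw [← hf'.1]
      refine sum_congr rfl fun i hi => Nat.div_mul_cancel ?_
      rcases hf₄ i hi with ⟨w, _, hw₂⟩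
      rw [← hw₂]
      exact dvd_mul_left _ _
    · intro i
      simp_rw [Multiset.count_sum', Multiset.count_replicate, sum_ite_eq']
      split_ifs with h
      · rcases hf₄ i h with ⟨w, hw₁, hw₂⟩
        rwa [← hw₂, Nat.mul_div_cancel _ (hs i h)]
      · exact hc _ h
    · intro i hi
      rw [Multiset.mem_sum] at hi
      rcases hi with ⟨j, hj₁, hj₂⟩
      rwa [Multiset.eq_of_mem_replicate hj₂]
    · ext i
      simp_rw [Multiset.count_sum', Multiset.count_replicate, sum_ite_eq']
      simp only [ne_eq, Multiset.mem_toFinset, not_not, smul_eq_mul, ite_mul,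
        zero_mul, Finsupp.coe_mk]
      split_ifs with h
      · apply Nat.div_mul_cancel
        rcases hf₄ i h with ⟨w, _, hw₂⟩
        apply Dvd.intro_left _ hw₂
      · apply symm
        rw [← Finsupp.notMem_support_iff]
        exact notMem_mono hf'.2 h

/-- Parts of a partition of `j ≤ N` lie in `Icc 1 N`. -/
theorem parts_mem_Icc {j N : ℕ} (hjN : j ≤ N) (p : Nat.Partition j) {i : ℕ}
    (hi : i ∈ p.parts) : i ∈ Finset.Icc 1 N := by
  have h1 : 0 < i := p.parts_pos hi
  have h2 : i ≤ j := by
    simpa [p.parts_sum] using Multiset.single_le_sum (fun _ _ => Nat.zero_le _) _ hi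
  exact Finset.mem_Icc.2 ⟨h1, h2.trans hjN⟩

theorem card_partition_eq_coeff {j N : ℕ} (hjN : j ≤ N) :
    (Fintype.card (Nat.Partition j) : ℤ) =
      coeff j (∏ i ∈ Finset.Icc 1 N, indicatorSeries ℤ {k | i ∣ k}) := by
  have hset : ∀ i : ℕ, ((· * i) '' (Set.univ : Set ℕ)) = {k : ℕ | i ∣ k} := by
    intro i
    ext k
    simp only [Set.mem_image, Set.mem_univ, true_and, Set.mem_setOf_eq]
    constructor
    · rintro ⟨p, rfl⟩; exact Dvd.intro_left p rfl
    · rintro ⟨p, rfl⟩; exact ⟨p, mul_comm p i⟩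
  have key := partialGF_prop ℤ j (Finset.Icc 1 N) (fun i hi => (Finset.mem_Icc.1 hi).1)
    (fun _ => Set.univ) (fun _ _ => trivial)
  rw [Finset.filter_true_of_mem
    (fun p _ => ⟨fun _ => trivial, fun i hi => parts_mem_Icc hjN p hi⟩),
    Finset.card_univ] at key
  simp only [hset] at key
  exact key

theorem card_distincts_eq_coeff {j N : ℕ} (hjN : j ≤ N) :
    (((Nat.Partition.distincts j).card : ℤ)) =
      coeff j (∏ i ∈ Finset.Icc 1 N, (1 + (X : PowerSeries ℤ) ^ i)) := by
  have key := partialGF_prop ℤ j (Finset.Icc 1 N) (fun i hi => (Finset.mem_Icc.1 hi).1)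
    (fun _ => {0, 1}) (fun _ _ => Or.inl rfl)
  have hfilter : (filter (fun p : Nat.Partition j =>
        (∀ k, p.parts.count k ∈ ({0, 1} : Set ℕ)) ∧ ∀ i ∈ p.parts, i ∈ Finset.Icc 1 N) univ) =
      Nat.Partition.distincts j := by
    ext p
    simp only [Nat.Partition.distincts, mem_filter, mem_univ, true_and]
    constructor
    · rintro ⟨h1, -⟩
      rw [Multiset.nodup_iff_count_le_one]
      intro a
      rcases h1 a with h | h <;> simp_all
    · intro h
      refine ⟨fun a => ?_, fun i hi => parts_mem_Icc hjN p hi⟩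
      have h2 := Multiset.nodup_iff_count_le_one.1 h a
      interval_cases h3 : (Multiset.count a p.parts) <;> simp
  rw [hfilter] at key
  rw [key]
  congr 1
  apply Finset.prod_congr rfl
  intro i hi
  obtain ⟨hi1, -⟩ := Finset.mem_Icc.1 hi
  obtain ⟨i, rfl⟩ := Nat.exists_eq_add_of_le hi1
  rw [add_comm 1 i]
  rw [show i + 1 = i.succ from rfl, two_series]
  
  simp [Set.image_pair]

theorem one_sub_X_pow_mul_indicator (i : ℕ) (hi : 0 < i) :
    (1 - (X : PowerSeries ℤ) ^ i) * indicatorSeries ℤ {k | i ∣ k} = 1 := by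
  ext n
  rw [sub_mul, one_mul, map_sub]
  rcases Nat.lt_or_ge n i with h | h
  · have h0 : coeff n ((X : PowerSeries ℤ) ^ i * indicatorSeries ℤ {k | i ∣ k}) = 0 := by
      rw [coeff_mul]
      apply Finset.sum_eq_zero
      rintro ⟨a, b⟩ hab
      rw [Finset.HasAntidiagonal.mem_antidiagonal] at hab
      rw [coeff_X_pow, if_neg (by omega), zero_mul]
    rw [h0, sub_zero, coeff_indicator, coeff_one]
    simp only [Set.mem_setOf_eq]
    rcases Nat.eq_zero_or_pos n with rfl | hn
    · simp
    · rw [if_neg (fun hd => absurd (Nat.le_of_dvd hn hd) (by omega : ¬ i ≤ n)),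
        if_neg (by omega)]
  · have h0 : coeff n ((X : PowerSeries ℤ) ^ i * indicatorSeries ℤ {k | i ∣ k}) =
        coeff (n - i) (indicatorSeries ℤ {k | i ∣ k}) := by
      rw [coeff_mul]
      rw [Finset.sum_eq_single (i, n - i)]
      · rw [coeff_X_pow, if_pos rfl, one_mul]
      · rintro ⟨a, b⟩ hab hne
        rw [Finset.HasAntidiagonal.mem_antidiagonal] at hab
        have hai : a ≠ i := by
          intro h'
          subst h'
          exact hne (by simp only [Prod.mk.injEq, true_and]; omega)
        rw [coeff_X_pow, if_neg hai, zero_mul]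
      · intro h'
        exact absurd (Finset.HasAntidiagonal.mem_antidiagonal.2 (by omega)) h'
    rw [h0, coeff_indicator, coeff_indicator, coeff_one]
    have hn : n ≠ 0 := by omega
    rw [if_neg hn]
    have hiff : i ∣ n ↔ i ∣ n - i := by
      constructor
      · intro hd; exact Nat.dvd_sub hd dvd_rfl
      · intro hd
        have := Nat.dvd_add hd (dvd_refl i)
        rwa [Nat.sub_add_cancel h] at this
    simp only [Set.mem_setOf_eq]
    by_cases hd : i ∣ n
    · rw [if_pos hd, if_pos (hiff.1 hd), sub_self]
    · rw [if_neg hd, if_neg (fun c => hd (hiff.2 c)), sub_zero]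

/-- `good n p` : `p = 1 + X^(n+1) * g` for some `g`. -/
def good (n : ℕ) (p : PowerSeries ℤ) : Prop :=
  ∃ g, p = 1 + (X : PowerSeries ℤ) ^ (n + 1) * g

theorem good_one (n : ℕ) : good n 1 := ⟨0, by simp⟩

theorem good_mul {n : ℕ} {p q : PowerSeries ℤ} (hp : good n p) (hq : good n q) :
    good n (p * q) := by
  obtain ⟨a, rfl⟩ := hp; obtain ⟨b, rfl⟩ := hq
  exact ⟨a + b + X ^ (n + 1) * a * b, by ring⟩

theorem good_pow {n : ℕ} {p : PowerSeries ℤ} (hp : good n p) (e : ℕ) : good n (p ^ e) := by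
  induction e with
  | zero => simpa using good_one n
  | succ e ih => rw [pow_succ]; exact good_mul ih hp

theorem good_one_sub_X_pow {n j : ℕ} (h : n + 1 ≤ j) :
    good n (1 - (X : PowerSeries ℤ) ^ j) := by
  refine ⟨-(X ^ (j - (n + 1))), ?_⟩
  rw [mul_neg, ← pow_add, Nat.add_sub_cancel' h]
  ring

theorem coeff_mul_good {n : ℕ} {A p : PowerSeries ℤ} (hp : good n p) :
    coeff n (A * p) = coeff n A := by
  obtain ⟨g, rfl⟩ := hp
  have h0 : coeff n (A * ((X : PowerSeries ℤ) ^ (n + 1) * g)) = 0 := by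
    have hdvd : (X : PowerSeries ℤ) ^ (n + 1) ∣ A * ((X : PowerSeries ℤ) ^ (n + 1) * g) :=
      ⟨A * g, by ring⟩
    exact X_pow_dvd_iff.1 hdvd n (Nat.lt_succ_self n)
  rw [mul_add, mul_one, map_add, h0, add_zero]

/-- Truncation stability for `prodPow`. -/
theorem coeff_prodPow_stable (d e : ℕ) (hd : 0 < d) {n m : ℕ} (hnm : n ≤ m) :
    coeff n (∏ k ∈ Finset.Icc 1 m, (1 - (X : PowerSeries ℤ) ^ (d * k)) ^ e) =
      coeff n (prodPow d e) := by
  rw [prodPow, coeff_mk]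
  rw [← Finset.prod_sdiff (Finset.Icc_subset_Icc_right hnm)]
  rw [mul_comm]
  apply coeff_mul_good
  apply Finset.prod_induction _ (good n) (fun _ _ => good_mul) (good_one n)
  intro k hk
  simp only [Finset.mem_sdiff, Finset.mem_Icc, not_and, not_le] at hk
  have hkn : n + 1 ≤ d * k := by
    have h1 : n < k := hk.2 hk.1.1
    calc n + 1 ≤ k := h1
    _ ≤ d * k := Nat.le_mul_of_pos_left k hd
  exact good_pow (good_one_sub_X_pow hkn) e

theorem euler_partition :
    prodPow 1 1 * PowerSeries.mk (fun n => (Fintype.card (Nat.Partition n) : ℤ)) = 1 := by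
  ext n
  have : coeff n (prodPow 1 1 * PowerSeries.mk (fun j => (Fintype.card (Nat.Partition j) : ℤ)))
      = coeff n ((∏ k ∈ Finset.Icc 1 n, (1 - (X : PowerSeries ℤ) ^ (1 * k)) ^ 1) *
          ∏ i ∈ Finset.Icc 1 n, indicatorSeries ℤ {k | i ∣ k}) := by
    rw [coeff_mul, coeff_mul]
    apply Finset.sum_congr rfl
    rintro ⟨i, j⟩ hij
    rw [Finset.HasAntidiagonal.mem_antidiagonal] at hij
    rw [coeff_prodPow_stable 1 1 one_pos (show i ≤ n by omega), coeff_mk,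
      card_partition_eq_coeff (show j ≤ n by omega)]
  rw [this]
  congr 1
  rw [← Finset.prod_mul_distrib]
  rw [Finset.prod_congr rfl (fun k hk => ?_), Finset.prod_const_one]
  rw [one_mul, pow_one]
  exact one_sub_X_pow_mul_indicator k (Finset.mem_Icc.1 hk).1

theorem euler_distinct :
    prodPow 1 1 * PowerSeries.mk (fun n => ((Nat.Partition.distincts n).card : ℤ)) =
      prodPow 2 1 := by
  ext n
  have : coeff n
      (prodPow 1 1 * PowerSeries.mk (fun j => ((Nat.Partition.distincts j).card : ℤ)))
      = coeff n ((∏ k ∈ Finset.Icc 1 n, (1 - (X : PowerSeries ℤ) ^ (1 * k)) ^ 1) *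
          ∏ i ∈ Finset.Icc 1 n, (1 + (X : PowerSeries ℤ) ^ i)) := by
    rw [coeff_mul, coeff_mul]
    apply Finset.sum_congr rfl
    rintro ⟨i, j⟩ hij
    rw [Finset.HasAntidiagonal.mem_antidiagonal] at hij
    rw [coeff_prodPow_stable 1 1 one_pos (show i ≤ n by omega), coeff_mk,
      card_distincts_eq_coeff (show j ≤ n by omega)]
  rw [this, ← Finset.prod_mul_distrib]
  rw [Finset.prod_congr rfl (fun k _ => ?_)]
  · exact coeff_prodPow_stable 2 1 two_pos le_rfl
  · rw [one_mul, pow_one, pow_one]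
    have : (1 - (X : PowerSeries ℤ) ^ k) * (1 + X ^ k) = 1 - (X ^ k) ^ 2 := by ring
    rw [this, ← pow_mul, mul_comm k 2]

theorem overpartition_conv :
    PowerSeries.mk (fun n => (overpartition n : ℤ)) =
      PowerSeries.mk (fun n => ((Nat.Partition.distincts n).card : ℤ)) *
        PowerSeries.mk (fun n => (Fintype.card (Nat.Partition n) : ℤ)) := by
  ext n
  rw [coeff_mk, coeff_mul, Finset.Nat.sum_antidiagonal_eq_sum_range_succ_mk]
  simp only [coeff_mk, overpartition]
  push_cast
  rfl

end

end OP

theorem overpartitionGF_eta_identity :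
    prodPow 1 1 ^ 2 * PowerSeries.mk (fun n => (overpartition n : ℤ)) = prodPow 2 1 := by
  rw [OP.overpartition_conv, sq]
  calc prodPow 1 1 * prodPow 1 1 *
      (PowerSeries.mk (fun n => ((Nat.Partition.distincts n).card : ℤ)) *
        PowerSeries.mk (fun n => (Fintype.card (Nat.Partition n) : ℤ)))
      = (prodPow 1 1 * PowerSeries.mk (fun n => ((Nat.Partition.distincts n).card : ℤ))) *
        (prodPow 1 1 * PowerSeries.mk (fun n => (Fintype.card (Nat.Partition n) : ℤ))) := by ring
    _ = prodPow 2 1 * 1 := by rw [OP.euler_distinct, OP.euler_partition]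
    _ = prodPow 2 1 := mul_one _
end
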